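/- Let p, q ∈ [1, ∞] be conjugate exponents (1/p + 1/q = 1). If f ∈ H^p(𝔹) and g ∈ H^q(𝔹), then the regular product f * g belongs to H^1(𝔹), with ‖f * g‖₁ ≤ 2‖f‖_p‖g‖_q. -/

import Mathlib

open MeasureTheory Metric Filter Set
open scoped Topology ENNReal Quaternion

noncomputable section

/-- The 2-sphere of imaginary units in the quaternions. -/
def QSphere : Set ℍ[ℝ] := {q | q ^ 2 = -1}

/-- The open unit ball of the quaternions. -/
def QBall : Set ℍ[ℝ] := Metric.ball 0 1

/-- The point `x + yI` of the slice `L_I = ℝ + ℝI`. -/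
def slicePt (I : ℍ[ℝ]) (x y : ℝ) : ℍ[ℝ] := (x : ℍ[ℝ]) + y • I

/-- A function `f : 𝔹 → ℍ` (given on all of `ℍ`, its values outside the unit ball being
irrelevant) is slice regular on the unit ball if, for every imaginary unit `I`, the
restriction of `f` to the slice `𝔹_I` is (real-)differentiable and satisfies the
Cauchy–Riemann equation `∂f/∂x + I ∂f/∂y = 0`. -/
def SliceRegular (f : ℍ[ℝ] → ℍ[ℝ]) : Prop :=
  ∀ I ∈ QSphere, ∀ p : ℝ × ℝ, p.1 ^ 2 + p.2 ^ 2 < 1 →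
    DifferentiableAt ℝ (fun w : ℝ × ℝ => f (slicePt I w.1 w.2)) p ∧
    fderiv ℝ (fun w : ℝ × ℝ => f (slicePt I w.1 w.2)) p (1, 0)
      + I * fderiv ℝ (fun w : ℝ × ℝ => f (slicePt I w.1 w.2)) p (0, 1) = 0

/-- The point `r e^{Iθ}` of the slice `L_I`. -/
def circlePt (I : ℍ[ℝ]) (r θ : ℝ) : ℍ[ℝ] := slicePt I (r * Real.cos θ) (r * Real.sin θ)

/-- The integral mean `M_p(f_I, r) = ((1/2π) ∫ |f(re^{Iθ})|^p dθ)^{1/p}`. -/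
def sliceMp (f : ℍ[ℝ] → ℍ[ℝ]) (I : ℍ[ℝ]) (p r : ℝ) : ℝ≥0∞ :=
  ENNReal.ofReal
    (((1 / (2 * Real.pi)) * ∫ θ in (0:ℝ)..(2 * Real.pi), ‖f (circlePt I r θ)‖ ^ p) ^ (1 / p))

/-- The slice `p`-norm `‖f_I‖_p = lim_{r→1⁻} M_p(f_I, r)`; since `r ↦ M_p(f_I,r)` is
increasing for slice regular `f`, the limit equals the supremum over `r ∈ [0,1)`. -/
def sliceNorm (f : ℍ[ℝ] → ℍ[ℝ]) (I : ℍ[ℝ]) (p : ℝ) : ℝ≥0∞ :=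
  ⨆ r ∈ Set.Ico (0:ℝ) 1, sliceMp f I p r

/-- The slice `p`-norm for an extended exponent `p ∈ (0,∞]`; for `p = ∞` it is the sup norm
on the slice. -/
def sliceNormE (f : ℍ[ℝ] → ℍ[ℝ]) (I : ℍ[ℝ]) (p : ℝ≥0∞) : ℝ≥0∞ :=
  if p = ⊤ then
    ⨆ (w : ℝ × ℝ) (_ : w.1 ^ 2 + w.2 ^ 2 < 1), ENNReal.ofReal ‖f (slicePt I w.1 w.2)‖
  else sliceNorm f I p.toReal

/-- The quaternionic Hardy norm `‖f‖_p = sup_{I∈𝕊} ‖f_I‖_p` (for `p = ∞` this is the sup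
norm on the ball). -/
def hardyNorm (f : ℍ[ℝ] → ℍ[ℝ]) (p : ℝ≥0∞) : ℝ≥0∞ :=
  ⨆ I ∈ QSphere, sliceNormE f I p

/-- Membership in the quaternionic Hardy space `H^p(𝔹)`. -/
def MemHp (f : ℍ[ℝ] → ℍ[ℝ]) (p : ℝ≥0∞) : Prop :=
  SliceRegular f ∧ hardyNorm f p < ⊤

section AuxHardy
open Quaternion
lemma unit_re {J : ℍ[ℝ]} (h : J^2 = -1) : J.re = 0 := by
  have h2 : J * J = -1 := by rw [← sq]; exact h
  have hre : (J*J).re = -1 := by rw [h2]; simp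
  have himI : (J*J).imI = 0 := by rw [h2]; simp
  have himJ : (J*J).imJ = 0 := by rw [h2]; simp
  have himK : (J*J).imK = 0 := by rw [h2]; simp
  simp only [Quaternion.re_mul, Quaternion.imI_mul, Quaternion.imJ_mul, Quaternion.imK_mul] at hre himI himJ himK
  nlinarith [sq_nonneg J.re, sq_nonneg J.imI, sq_nonneg J.imJ, sq_nonneg J.imK]

lemma unit_normSq {J : ℍ[ℝ]} (h : J^2 = -1) : J.imI^2 + J.imJ^2 + J.imK^2 = 1 := by
  have h2 : J * J = -1 := by rw [← sq]; exact h
  have hre : (J*J).re = -1 := by rw [h2]; simp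
  have hre0 := unit_re h
  simp only [Quaternion.re_mul] at hre
  nlinarith

lemma pure_sq {P : ℍ[ℝ]} (h0 : P.re = 0) (h1 : P.imI^2+P.imJ^2+P.imK^2 = 1) : P^2 = -1 := by
  rw [sq]
  ext <;> simp only [Quaternion.re_mul, Quaternion.imI_mul, Quaternion.imJ_mul, Quaternion.imK_mul,
    Quaternion.re_neg, Quaternion.imI_neg, Quaternion.imJ_neg, Quaternion.imK_neg,
    Quaternion.re_one, Quaternion.imI_one, Quaternion.imJ_one, Quaternion.imK_one, h0]
  · nlinarith
  all_goals ring

lemma exists_perp {J : ℍ[ℝ]} (hJ : J^2 = -1) :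
    ∃ P : ℍ[ℝ], P^2 = -1 ∧ J * P = -(P * J) := by
  have h0 := unit_re hJ
  have h1 := unit_normSq hJ
  by_cases hab : J.imI = 0 ∧ J.imJ = 0
  · obtain ⟨P, hPre, hPI, hPJ, hPK⟩ : ∃ P : ℍ[ℝ], P.re = 0 ∧ P.imI = 1 ∧ P.imJ = 0 ∧ P.imK = 0 :=
      ⟨⟨0,1,0,0⟩, rfl, rfl, rfl, rfl⟩
    refine ⟨P, pure_sq hPre (by rw [hPI, hPJ, hPK]; norm_num), ?_⟩
    ext <;> simp only [Quaternion.re_mul, Quaternion.imI_mul, Quaternion.imJ_mul,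
        Quaternion.imK_mul, Quaternion.re_neg, Quaternion.imI_neg, Quaternion.imJ_neg,
        Quaternion.imK_neg, h0, hab.1, hab.2, hPre, hPI, hPJ, hPK] <;> ring
  · have hs : 0 < J.imI^2 + J.imJ^2 := by
      rcases not_and_or.1 hab with h | h
      · positivity
      · positivity
    set s := Real.sqrt (J.imI^2 + J.imJ^2) with hsdef
    have hspos : 0 < s := Real.sqrt_pos.2 hs
    have hssq : s^2 = J.imI^2 + J.imJ^2 := Real.sq_sqrt hs.le
    obtain ⟨P, hPre, hPI, hPJ, hPK⟩ : ∃ P : ℍ[ℝ], P.re = 0 ∧ P.imI = J.imJ/s ∧ P.imJ = -J.imI/s ∧ P.imK = 0 :=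
      ⟨⟨0, J.imJ/s, -J.imI/s, 0⟩, rfl, rfl, rfl, rfl⟩
    refine ⟨P, pure_sq hPre ?_, ?_⟩
    · rw [hPI, hPJ, hPK]
      field_simp
      linarith
    · ext <;> simp only [Quaternion.re_mul, Quaternion.imI_mul, Quaternion.imJ_mul,
        Quaternion.imK_mul, Quaternion.re_neg, Quaternion.imI_neg, Quaternion.imJ_neg,
        Quaternion.imK_neg, h0, hPre, hPI, hPJ, hPK] <;> ring

lemma comm_eq {J v : ℍ[ℝ]} (hJ : J^2 = -1) (hv : J*v = v*J) :
    v = (v.re : ℍ[ℝ]) + (-((J*v).re)) • J := by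
  have h0 := unit_re hJ
  have h1 := unit_normSq hJ
  have e1 : (J*v).imI = (v*J).imI := by rw [hv]
  have e2 : (J*v).imJ = (v*J).imJ := by rw [hv]
  have e3 : (J*v).imK = (v*J).imK := by rw [hv]
  simp only [Quaternion.imI_mul, Quaternion.imJ_mul, Quaternion.imK_mul, h0] at e1 e2 e3
  have c1 : J.imJ*v.imK - J.imK*v.imJ = 0 := by linarith
  have c2 : J.imK*v.imI - J.imI*v.imK = 0 := by linarith
  have c3 : J.imI*v.imJ - J.imJ*v.imI = 0 := by linarith
  ext
  · simp only [Quaternion.re_add, Quaternion.re_coe, Quaternion.re_smul, smul_eq_mul,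
      Quaternion.re_mul, h0]
    ring
  · simp only [Quaternion.imI_add, Quaternion.imI_coe, Quaternion.imI_smul, Quaternion.re_mul, h0, smul_eq_mul]
    linear_combination (-v.imI)*h1 - J.imJ*c3 + J.imK*c2
  · simp only [Quaternion.imJ_add, Quaternion.imJ_coe, Quaternion.imJ_smul, Quaternion.re_mul, h0, smul_eq_mul]
    linear_combination (-v.imJ)*h1 - J.imK*c1 + J.imI*c3
  · simp only [Quaternion.imK_add, Quaternion.imK_coe, Quaternion.imK_smul, Quaternion.re_mul, h0, smul_eq_mul]
    linear_combination (-v.imK)*h1 - J.imI*c2 + J.imJ*c1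


/-- the complex "coordinate" along the slice of J -/
def zetaL (J : ℍ[ℝ]) : ℍ[ℝ] →L[ℝ] ℂ :=
  LinearMap.toContinuousLinearMap
  { toFun := fun v => Complex.mk v.re (-((J*v).re))
    map_add' := by
      intro v w
      apply Complex.ext <;> simp [mul_add] <;> ring
    map_smul' := by
      intro r v
      apply Complex.ext <;> simp [mul_smul_comm] <;> ring }

lemma zetaL_apply (J v : ℍ[ℝ]) : zetaL J v = Complex.mk v.re (-((J*v).re)) := rfl

lemma zetaL_Jmul {J : ℍ[ℝ]} (hJJ : J*J = -1) (v : ℍ[ℝ]) :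
    zetaL J (J*v) = Complex.I * zetaL J v := by
  have h2 : J*(J*v) = -v := by rw [← mul_assoc, hJJ]; simp
  apply Complex.ext <;>
    simp [zetaL_apply, h2, Complex.ext_iff, Complex.I_mul]

/-- projection onto the commuting part composed with zeta -/
def projC (J : ℍ[ℝ]) : ℍ[ℝ] →L[ℝ] ℍ[ℝ] :=
  LinearMap.toContinuousLinearMap
  { toFun := fun v => (2⁻¹:ℝ) • (v - J*v*J)
    map_add' := by
      intro v w
      have h : (v+w) - J*(v+w)*J = (v - J*v*J) + (w - J*w*J) := by noncomm_ring
      show (2⁻¹:ℝ) • ((v+w) - J*(v+w)*J) = _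
      rw [h, smul_add]
    map_smul' := by
      intro r v
      have h : J*(r • v)*J = r • (J*v*J) := by
        rw [mul_smul_comm, smul_mul_assoc]
      show (2⁻¹:ℝ) • ((r•v) - J*(r•v)*J) = r • ((2⁻¹:ℝ) • (v - J*v*J))
      rw [h, ← smul_sub, smul_comm] }

def projA (J P : ℍ[ℝ]) : ℍ[ℝ] →L[ℝ] ℍ[ℝ] :=
  LinearMap.toContinuousLinearMap
  { toFun := fun v => (2⁻¹:ℝ) • (-((v + J*v*J)*P))
    map_add' := by
      intro v w
      have h : -(((v+w) + J*(v+w)*J)*P) = -((v + J*v*J)*P) + -((w + J*w*J)*P) := by noncomm_ring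
      show (2⁻¹:ℝ) • (-(((v+w) + J*(v+w)*J)*P)) = _
      rw [h, smul_add]
    map_smul' := by
      intro r v
      have h : -(((r•v) + J*(r•v)*J)*P) = r • (-((v + J*v*J)*P)) := by
        rw [mul_smul_comm, smul_mul_assoc, ← smul_add, smul_mul_assoc, smul_neg]
      show (2⁻¹:ℝ) • (-(((r•v) + J*(r•v)*J)*P)) = r • ((2⁻¹:ℝ) • (-((v + J*v*J)*P)))
      rw [h, smul_comm] }

lemma projC_apply (J v : ℍ[ℝ]) : projC J v = (2⁻¹:ℝ) • (v - J*v*J) := rfl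
lemma projA_apply (J P v : ℍ[ℝ]) : projA J P v = (2⁻¹:ℝ) • (-((v + J*v*J)*P)) := rfl

lemma projC_Jmul (J v : ℍ[ℝ]) : projC J (J*v) = J * projC J v := by
  rw [projC_apply, projC_apply, mul_smul_comm]
  congr 1
  noncomm_ring

lemma projA_Jmul (J P v : ℍ[ℝ]) : projA J P (J*v) = J * projA J P v := by
  rw [projA_apply, projA_apply, mul_smul_comm]
  congr 1
  noncomm_ring

lemma projC_comm {J : ℍ[ℝ]} (hJJ : J*J = -1) (v : ℍ[ℝ]) :
    J * projC J v = (projC J v) * J := by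
  rw [projC_apply, mul_smul_comm, smul_mul_assoc]
  congr 1
  have key : J*(v - J*v*J) - (v - J*v*J)*J = J*v*(J*J+1) - (J*J+1)*(v*J) := by noncomm_ring
  have : J*(v - J*v*J) - (v - J*v*J)*J = 0 := by rw [key, hJJ]; simp
  linear_combination (norm := noncomm_ring) this

lemma projA_comm {J P : ℍ[ℝ]} (hJJ : J*J = -1) (hJP : J*P = -(P*J)) (v : ℍ[ℝ]) :
    J * projA J P v = (projA J P v) * J := by
  rw [projA_apply, mul_smul_comm, smul_mul_assoc]
  congr 1
  have h1 : J*(v + J*v*J) = -((v + J*v*J)*J) := by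
    linear_combination (norm := noncomm_ring) hJJ * (v*J) + (J*v) * hJJ
  linear_combination (norm := noncomm_ring) (-h1) * P + (v + J*v*J) * hJP

lemma recon {J P : ℍ[ℝ]} (hJ : J^2 = -1) (hP : P^2 = -1) (hJP : J*P = -(P*J)) (v : ℍ[ℝ]) :
    ((((zetaL J (projC J v)).re : ℝ) : ℍ[ℝ]) + (zetaL J (projC J v)).im • J)
      + (((((zetaL J (projA J P v)).re : ℝ)) : ℍ[ℝ]) + (zetaL J (projA J P v)).im • J) * P
    = v := by
  have hJJ : J*J = -1 := by rw [← sq]; exact hJ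
  have hPP : P*P = -1 := by rw [← sq]; exact hP
  have e1 : ((((zetaL J (projC J v)).re : ℝ) : ℍ[ℝ]) + (zetaL J (projC J v)).im • J) = projC J v := by
    rw [zetaL_apply]
    exact (comm_eq hJ (projC_comm hJJ v)).symm
  have e2 : ((((zetaL J (projA J P v)).re : ℝ) : ℍ[ℝ]) + (zetaL J (projA J P v)).im • J) = projA J P v := by
    rw [zetaL_apply]
    exact (comm_eq hJ (projA_comm hJJ hJP v)).symm
  rw [e1, e2, projC_apply, projA_apply, smul_mul_assoc]
  have : (-( (v + J*v*J) * P)) * P = v + J*v*J := by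
    linear_combination (norm := noncomm_ring) (-(v + J*v*J)) * hPP
  rw [this]
  rw [← smul_add]
  have : (v - J*v*J) + (v + J*v*J) = (2:ℝ) • v := by
    have : (v - J*v*J) + (v + J*v*J) = v + v := by noncomm_ring
    rw [this, two_smul]
  rw [this, smul_smul]
  norm_num

lemma complex_sq_norm (z : ℂ) : ‖z‖^2 = z.re^2 + z.im^2 := by
  rw [Complex.sq_norm, Complex.normSq_apply]; ring

lemma keyZero {J : ℍ[ℝ]} (hJ : J^2 = -1) (d : ℝ×ℝ → ℍ[ℝ])
    (hd : ∀ p : ℝ×ℝ, p.1^2+p.2^2 < 1 → DifferentiableAt ℝ d p ∧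
       fderiv ℝ d p (1,0) + J * fderiv ℝ d p (0,1) = 0)
    (h0 : ∀ x : ℝ, x^2 < 1 → d (x,0) = 0) :
    ∀ p : ℝ×ℝ, p.1^2+p.2^2 < 1 → d p = 0 := by
  have hJJ : J*J = -1 := by rw [← sq]; exact hJ
  obtain ⟨P, hP, hJP⟩ := exists_perp hJ
  have main : ∀ A : ℍ[ℝ] →L[ℝ] ℂ, (∀ v, A (J*v) = Complex.I * A v) →
      ∀ p : ℝ×ℝ, p.1^2+p.2^2 < 1 → A (d p) = 0 := by
    intro A hA
    set F : ℂ → ℂ := fun z => A (d (z.re, z.im)) with hF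
    have hmem : ∀ z : ℂ, z ∈ Metric.ball (0:ℂ) 1 → z.re^2 + z.im^2 < 1 := by
      intro z hz
      rw [Metric.mem_ball, dist_zero_right] at hz
      nlinarith [norm_nonneg z, complex_sq_norm z]
    have hdiff : DifferentiableOn ℂ F (Metric.ball 0 1) := by
      intro z hz
      have hz' := hmem z (Metric.ball_subset_ball le_rfl hz)
      obtain ⟨hd1, hd2⟩ := hd (z.re, z.im) hz'
      set L : ℂ →L[ℝ] ℂ := (A.comp (fderiv ℝ d (z.re, z.im))).comp
          (Complex.equivRealProdCLM.toContinuousLinearMap) with hLdef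
      have hre : HasFDerivAt F L z := by
        have h1 : HasFDerivAt (fun w : ℝ×ℝ => A (d w)) (A.comp (fderiv ℝ d (z.re, z.im))) (z.re, z.im) :=
          A.hasFDerivAt.comp _ hd1.hasFDerivAt
        have h2 : HasFDerivAt (fun z : ℂ => (z.re, z.im))
            (Complex.equivRealProdCLM.toContinuousLinearMap) z :=
          Complex.equivRealProdCLM.hasFDerivAt
        exact h1.comp z h2
      have hL1 : L 1 = A (fderiv ℝ d (z.re, z.im) (1, 0)) := by
        simp [hLdef]
      have hLI : L Complex.I = A (fderiv ℝ d (z.re, z.im) (0, 1)) := by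
        simp [hLdef]
      have hCR : L Complex.I = Complex.I * L 1 := by
        rw [hL1, hLI]
        have : fderiv ℝ d (z.re, z.im) (1,0) = -(J * fderiv ℝ d (z.re, z.im) (0,1)) := by
          rw [eq_neg_iff_add_eq_zero]; exact hd2
        rw [this, map_neg, hA, mul_neg, ← mul_assoc, Complex.I_mul_I]
        ring
      have hLlin : ∀ w : ℂ, L w = L 1 * w := by
        intro w
        have hw : w = w.re • (1:ℂ) + w.im • Complex.I := by
          apply Complex.ext <;> simp
        calc L w = L (w.re • (1:ℂ) + w.im • Complex.I) := by rw [← hw]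
        _ = w.re • L 1 + w.im • L Complex.I := by rw [map_add, _root_.map_smul, _root_.map_smul]
        _ = L 1 * w := by
            rw [hCR, Complex.real_smul, Complex.real_smul]
            have hri := Complex.re_add_im w
            linear_combination (L 1) * hri
      have hM : HasFDerivAt F ((L 1) • (ContinuousLinearMap.id ℂ ℂ)) z := by
        refine hasFDerivAt_of_restrictScalars ℝ hre ?_
        ext w
        simp [hLlin w]
      exact hM.differentiableAt.differentiableWithinAt
    have han : AnalyticOnNhd ℂ F (Metric.ball 0 1) := hdiff.analyticOnNhd Metric.isOpen_ball
    have hzero : ∀ x : ℝ, x^2 < 1 → F ((x:ℂ)) = 0 := by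
      intro x hx
      have : F ((x:ℂ)) = A (d (x, 0)) := by
        simp [hF]
      rw [this, h0 x hx, map_zero]
    have hfreq : ∃ᶠ z in nhdsWithin (0:ℂ) {0}ᶜ, F z = 0 := by
      have ht1 : Filter.Tendsto (fun n : ℕ => ((n:ℝ)+2)⁻¹) Filter.atTop (nhds 0) :=
        tendsto_inv_atTop_zero.comp (Filter.tendsto_atTop_add_const_right _ 2 tendsto_natCast_atTop_atTop)
      have ht2 : Filter.Tendsto (fun n : ℕ => ((((n:ℝ)+2)⁻¹ : ℝ) : ℂ)) Filter.atTop (nhds 0) := by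
        have := (Complex.continuous_ofReal.tendsto 0).comp ht1
        simpa [Function.comp_def] using this
      have ht : Filter.Tendsto (fun n : ℕ => ((((n:ℝ)+2)⁻¹ : ℝ) : ℂ)) Filter.atTop (nhdsWithin 0 {0}ᶜ) :=
        tendsto_nhdsWithin_of_tendsto_nhds_of_eventually_within _ ht2
            (Filter.Eventually.of_forall (fun n => by
              simp only [Set.mem_compl_iff, Set.mem_singleton_iff]
              exact Complex.ofReal_ne_zero.2 (by positivity)))
      refine ht.frequently (Filter.Frequently.of_forall (fun n => ?_))
      apply hzero
      have h2n : (0:ℝ) < (n:ℝ)+2 := by positivity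
      have : ((n:ℝ)+2)⁻¹ ≤ 2⁻¹ := by
        apply inv_anti₀ <;> norm_num
      nlinarith [inv_pos.2 h2n]
    have heq := han.eqOn_zero_of_preconnected_of_frequently_eq_zero
      (convex_ball (0:ℂ) 1).isPreconnected (by simp : (0:ℂ) ∈ Metric.ball (0:ℂ) 1) hfreq
    intro p hp
    have hpz : (Complex.mk p.1 p.2) ∈ Metric.ball (0:ℂ) 1 := by
      rw [Metric.mem_ball, dist_zero_right]
      nlinarith [norm_nonneg (Complex.mk p.1 p.2), complex_sq_norm (Complex.mk p.1 p.2)]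
    have := heq hpz
    simpa [hF] using this
  intro p hp
  have h1 := main ((zetaL J).comp (projC J))
    (fun v => by rw [ContinuousLinearMap.comp_apply, ContinuousLinearMap.comp_apply,
      projC_Jmul, zetaL_Jmul hJJ]) p hp
  have h2 := main ((zetaL J).comp (projA J P))
    (fun v => by rw [ContinuousLinearMap.comp_apply, ContinuousLinearMap.comp_apply,
      projA_Jmul, zetaL_Jmul hJJ]) p hp
  rw [ContinuousLinearMap.comp_apply] at h1 h2
  have hrec := recon hJ hP hJP (d p)
  rw [h1, h2] at hrec
  simpa using hrec.symm

def lmulCLM (a : ℍ[ℝ]) : ℍ[ℝ] →L[ℝ] ℍ[ℝ] :=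
  LinearMap.toContinuousLinearMap
  { toFun := fun v => a * v
    map_add' := fun v w => mul_add a v w
    map_smul' := fun r v => (mul_smul_comm r a v) }

lemma lmulCLM_apply (a v : ℍ[ℝ]) : lmulCLM a v = a * v := rfl

def reflCLM : ℝ × ℝ →L[ℝ] ℝ × ℝ :=
  LinearMap.toContinuousLinearMap
  { toFun := fun w => (w.1, -w.2)
    map_add' := by intro v w; ext <;> simp <;> ring
    map_smul' := by intro r v; ext <;> simp }

lemma reflCLM_apply (w : ℝ × ℝ) : reflCLM w = (w.1, -w.2) := rfl

/-- The Representation Formula for slice regular functions. -/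
lemma repFormula {g : ℍ[ℝ] → ℍ[ℝ]} (hg : SliceRegular g) {I J : ℍ[ℝ]}
    (hI : I ∈ QSphere) (hJ : J ∈ QSphere) {x y : ℝ} (hxy : x^2 + y^2 < 1) :
    g (slicePt J x y) = ((2⁻¹:ℝ) • (1 - J*I)) * g (slicePt I x y)
      + ((2⁻¹:ℝ) • (1 + J*I)) * g (slicePt I x (-y)) := by
  have hII : I*I = -1 := by rw [← sq]; exact hI
  have hJJ : J*J = -1 := by rw [← sq]; exact hJ
  set a : ℍ[ℝ] := (2⁻¹:ℝ) • (1 - J*I) with ha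
  set b : ℍ[ℝ] := (2⁻¹:ℝ) • (1 + J*I) with hb
  set u : ℝ × ℝ → ℍ[ℝ] := fun w => g (slicePt I w.1 w.2) with hu
  set uJ : ℝ × ℝ → ℍ[ℝ] := fun w => g (slicePt J w.1 w.2) with huJ
  set d : ℝ × ℝ → ℍ[ℝ] := fun w => uJ w - a * u w - b * u (reflCLM w) with hd
  have e1 : a * I = J * a := by
    rw [ha, smul_mul_assoc, mul_smul_comm]
    congr 1
    linear_combination (norm := noncomm_ring) (-J)*hII + hJJ*I
  have e2 : b * I = -(J * b) := by
    rw [hb, smul_mul_assoc, mul_smul_comm, ← smul_neg]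
    congr 1
    linear_combination (norm := noncomm_ring) J*hII + hJJ*I
  have hdisc : ∀ p : ℝ × ℝ, p.1^2 + p.2^2 < 1 → ((p.1, -p.2) : ℝ × ℝ).1^2 + ((p.1, -p.2) : ℝ × ℝ).2^2 < 1 := by
    intro p hp; simpa using hp
  have hkey : ∀ p : ℝ × ℝ, p.1^2 + p.2^2 < 1 → d p = 0 := by
    apply keyZero hJ
    · intro p hp
      obtain ⟨hud, hucr⟩ := hg I hI p hp
      obtain ⟨hud2, hucr2⟩ := hg I hI (p.1, -p.2) (hdisc p hp)
      obtain ⟨hJd, hJcr⟩ := hg J hJ p hp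
      rw [← hu] at hud hucr hud2 hucr2
      rw [← huJ] at hJd hJcr
      have hR : HasFDerivAt (fun w : ℝ × ℝ => u (reflCLM w)) ((fderiv ℝ u (p.1, -p.2)).comp reflCLM) p := by
        have h2 : HasFDerivAt u (fderiv ℝ u (p.1, -p.2)) (reflCLM p) := by
          rw [reflCLM_apply]; exact hud2.hasFDerivAt
        exact h2.comp p reflCLM.hasFDerivAt
      have hB : HasFDerivAt (fun w => a * u w) ((lmulCLM a).comp (fderiv ℝ u p)) p :=
        (lmulCLM a).hasFDerivAt.comp p hud.hasFDerivAt
      have hC : HasFDerivAt (fun w => b * u (reflCLM w))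
          ((lmulCLM b).comp ((fderiv ℝ u (p.1, -p.2)).comp reflCLM)) p :=
        (lmulCLM b).hasFDerivAt.comp p hR
      have hDd : HasFDerivAt d ((fderiv ℝ uJ p) - (lmulCLM a).comp (fderiv ℝ u p)
          - (lmulCLM b).comp ((fderiv ℝ u (p.1, -p.2)).comp reflCLM)) p :=
        (hJd.hasFDerivAt.sub hB).sub hC
      refine ⟨hDd.differentiableAt, ?_⟩
      rw [hDd.fderiv]
      simp only [ContinuousLinearMap.coe_sub', Pi.sub_apply, ContinuousLinearMap.comp_apply,
        reflCLM_apply, lmulCLM_apply]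
      have r1 : ((1:ℝ), -(0:ℝ)) = ((1:ℝ), (0:ℝ)) := by norm_num
      have hneg : ((0:ℝ), (-1:ℝ)) = -((0:ℝ), (1:ℝ)) := by norm_num
      rw [r1, hneg, map_neg]
      have c1 : fderiv ℝ uJ p (1,0) = -(J * fderiv ℝ uJ p (0,1)) := by
        rw [eq_neg_iff_add_eq_zero]; exact hJcr
      have c2 : fderiv ℝ u p (1,0) = -(I * fderiv ℝ u p (0,1)) := by
        rw [eq_neg_iff_add_eq_zero]; exact hucr
      have c3 : fderiv ℝ u (p.1, -p.2) (1,0) = -(I * fderiv ℝ u (p.1, -p.2) (0,1)) := by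
        rw [eq_neg_iff_add_eq_zero]; exact hucr2
      rw [c1, c2, c3]
      linear_combination (norm := noncomm_ring)
        e1 * (fderiv ℝ u p (0,1)) + e2 * (fderiv ℝ u (p.1, -p.2) (0,1))
    · intro x hx
      have hab : a + b = 1 := by
        rw [ha, hb, ← smul_add]
        have : (1 - J*I) + (1 + J*I) = (2:ℝ) • 1 := by
          rw [two_smul]; noncomm_ring
        rw [this, smul_smul]
        norm_num
      have hs : ∀ K : ℍ[ℝ], slicePt K x 0 = (x : ℍ[ℝ]) := by
        intro K; rw [slicePt, zero_smul, add_zero]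
      simp only [hd, huJ, hu, reflCLM_apply, neg_zero, hs]
      have : g ((x:ℝ) : ℍ[ℝ]) - a * g (x:ℝ) - b * g (x:ℝ) = (1 - (a + b)) * g (x:ℝ) := by
        noncomm_ring
      rw [this, hab]
      simp
  have := hkey (x, y) hxy
  simp only [hd, huJ, hu, reflCLM_apply] at this
  have h2 := sub_eq_zero.mp (by rw [sub_sub] at this; exact this)
  exact h2

lemma unit_norm {J : ℍ[ℝ]} (h : J^2 = -1) : ‖J‖ = 1 := by
  have h1 : normSq J = 1 := by
    rw [normSq_def']
    rw [unit_re h]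
    have := unit_normSq h
    nlinarith
  have := Quaternion.normSq_eq_norm_mul_self J
  nlinarith [norm_nonneg J]

lemma normSq_slicePt {K : ℍ[ℝ]} (hI : K^2 = -1) (x y : ℝ) :
    normSq (slicePt K x y) = x^2 + y^2 := by
  have h0 := unit_re hI
  have h1 := unit_normSq hI
  simp only [slicePt]
  rw [normSq_def']
  simp [h0]
  ring_nf
  nlinarith [h1]

lemma norm_slicePt {K : ℍ[ℝ]} (hI : K^2 = -1) (x y : ℝ) :
    ‖slicePt K x y‖^2 = x^2 + y^2 := by
  have := Quaternion.normSq_eq_norm_mul_self (slicePt K x y)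
  have h2 := normSq_slicePt hI x y
  nlinarith

lemma repBound {g : ℍ[ℝ] → ℍ[ℝ]} (hg : SliceRegular g) {I J : ℍ[ℝ]}
    (hI : I ∈ QSphere) (hJ : J ∈ QSphere) {x y : ℝ} (hxy : x^2 + y^2 < 1) :
    ‖g (slicePt J x y)‖ ≤ ‖g (slicePt I x y)‖ + ‖g (slicePt I x (-y))‖ := by
  have hnI : ‖I‖ = 1 := unit_norm hI
  have hnJ : ‖J‖ = 1 := unit_norm hJ
  have key : ∀ v : ℍ[ℝ], ‖v‖ ≤ 2 → ∀ w : ℍ[ℝ], ‖((2⁻¹:ℝ) • v) * w‖ ≤ ‖w‖ := by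
    intro v hv w
    rw [norm_mul, norm_smul]
    have : |(2⁻¹:ℝ)| * ‖v‖ ≤ 1 := by
      rw [abs_of_pos (by norm_num : (0:ℝ) < 2⁻¹)]
      linarith
    calc |(2⁻¹:ℝ)| * ‖v‖ * ‖w‖ ≤ 1 * ‖w‖ := by
          apply mul_le_mul_of_nonneg_right this (norm_nonneg w)
    _ = ‖w‖ := one_mul _
  have hJI : ‖J * I‖ = 1 := by rw [norm_mul, hnI, hnJ]; norm_num
  have h1 : ‖(1:ℍ[ℝ]) - J*I‖ ≤ 2 := by
    calc ‖(1:ℍ[ℝ]) - J*I‖ ≤ ‖(1:ℍ[ℝ])‖ + ‖J*I‖ := norm_sub_le _ _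
    _ = 2 := by rw [norm_one, hJI]; norm_num
  have h2 : ‖(1:ℍ[ℝ]) + J*I‖ ≤ 2 := by
    calc ‖(1:ℍ[ℝ]) + J*I‖ ≤ ‖(1:ℍ[ℝ])‖ + ‖J*I‖ := norm_add_le _ _
    _ = 2 := by rw [norm_one, hJI]; norm_num
  rw [repFormula hg hI hJ hxy]
  calc ‖((2⁻¹:ℝ) • ((1:ℍ[ℝ]) - J*I)) * g (slicePt I x y)
        + ((2⁻¹:ℝ) • ((1:ℍ[ℝ]) + J*I)) * g (slicePt I x (-y))‖
      ≤ ‖((2⁻¹:ℝ) • ((1:ℍ[ℝ]) - J*I)) * g (slicePt I x y)‖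
        + ‖((2⁻¹:ℝ) • ((1:ℍ[ℝ]) + J*I)) * g (slicePt I x (-y))‖ := norm_add_le _ _
  _ ≤ ‖g (slicePt I x y)‖ + ‖g (slicePt I x (-y))‖ :=
      add_le_add (key _ h1 _) (key _ h2 _)

end AuxHardy

open Classical in
/-- The pointwise formula for the regular `*`-product of two slice regular functions:
`(f*g)(q) = f(q)·g(f(q)⁻¹ q f(q))` if `f(q) ≠ 0`, and `0` otherwise. -/
def starProd (h g : ℍ[ℝ] → ℍ[ℝ]) : ℍ[ℝ] → ℍ[ℝ] :=
  fun q => if h q = 0 then 0 else h q * g ((h q)⁻¹ * q * h q)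



section AuxHardy3
open Quaternion MeasureTheory

/-- normalized arclength measure on the parameter circle -/
def circM : Measure ℝ :=
  (ENNReal.ofReal (2 * Real.pi))⁻¹ • (volume.restrict (Set.Ioc (0:ℝ) (2*Real.pi)))

lemma circle_disc {r : ℝ} (hr : r ∈ Set.Ico (0:ℝ) 1) (θ : ℝ) :
    (r*Real.cos θ)^2 + (r*Real.sin θ)^2 < 1 := by
  have hid : (r*Real.cos θ)^2 + (r*Real.sin θ)^2 = r^2 * (Real.sin θ^2 + Real.cos θ^2) := by ring
  rw [hid, Real.sin_sq_add_cos_sq, mul_one]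
  nlinarith [hr.1, hr.2]

lemma contCircle {h : ℍ[ℝ] → ℍ[ℝ]} (hh : SliceRegular h) {I : ℍ[ℝ]} (hI : I ∈ QSphere)
    {r : ℝ} (hr : r ∈ Set.Ico (0:ℝ) 1) : Continuous (fun θ : ℝ => h (circlePt I r θ)) := by
  rw [continuous_iff_continuousAt]
  intro θ
  have h1 : ContinuousAt (fun w : ℝ×ℝ => h (slicePt I w.1 w.2)) (r*Real.cos θ, r*Real.sin θ) :=
    ((hh I hI _ (circle_disc hr θ)).1).continuousAt
  have h2 : Continuous (fun θ : ℝ => ((r*Real.cos θ, r*Real.sin θ) : ℝ×ℝ)) :=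
    (continuous_const.mul Real.continuous_cos).prodMk (continuous_const.mul Real.continuous_sin)
  exact ContinuousAt.comp (f := fun θ : ℝ => ((r*Real.cos θ, r*Real.sin θ) : ℝ×ℝ))
    (x := θ) h1 h2.continuousAt

lemma sliceMp_eq_lintegral (f : ℍ[ℝ] → ℍ[ℝ]) (I : ℍ[ℝ]) {s r : ℝ} (hs : 0 < s)
    (hcont : Continuous (fun θ : ℝ => ‖f (circlePt I r θ)‖)) :
    sliceMp f I s r
      = (∫⁻ θ, (ENNReal.ofReal ‖f (circlePt I r θ)‖) ^ s ∂circM) ^ (1/s) := by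
  have h2pi : (0:ℝ) < 2*Real.pi := by positivity
  set u : ℝ → ℝ := fun θ => ‖f (circlePt I r θ)‖ with hu
  have hunn : ∀ θ, 0 ≤ u θ := fun θ => norm_nonneg _
  have hus : Continuous (fun θ => u θ ^ s) := by
    apply hcont.rpow_const
    intro x; right; exact hs.le
  have hint : IntegrableOn (fun θ => u θ ^ s) (Set.Ioc 0 (2*Real.pi)) := hus.integrableOn_Ioc
  have hIoc : ∫ θ in (0:ℝ)..(2*Real.pi), u θ ^ s = ∫ θ in Set.Ioc (0:ℝ) (2*Real.pi), u θ ^ s :=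
    intervalIntegral.integral_of_le h2pi.le
  have hA : (0:ℝ) ≤ ∫ θ in Set.Ioc (0:ℝ) (2*Real.pi), u θ ^ s :=
    setIntegral_nonneg measurableSet_Ioc (fun θ _ => Real.rpow_nonneg (hunn θ) s)
  have hlin : ∫⁻ θ, (ENNReal.ofReal (u θ)) ^ s ∂(volume.restrict (Set.Ioc (0:ℝ) (2*Real.pi)))
      = ENNReal.ofReal (∫ θ in Set.Ioc (0:ℝ) (2*Real.pi), u θ ^ s) := by
    have hptw : ∀ θ, (ENNReal.ofReal (u θ)) ^ s = ENNReal.ofReal (u θ ^ s) :=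
      fun θ => ENNReal.ofReal_rpow_of_nonneg (hunn θ) hs.le
    simp_rw [hptw]
    exact (MeasureTheory.ofReal_integral_eq_lintegral_ofReal hint
      (Filter.Eventually.of_forall (fun θ => Real.rpow_nonneg (hunn θ) s))).symm
  rw [sliceMp, circM, lintegral_smul_measure, hlin, hIoc]
  rw [← ENNReal.ofReal_inv_of_pos h2pi, smul_eq_mul, ← ENNReal.ofReal_mul (by positivity)]
  rw [← ENNReal.ofReal_rpow_of_nonneg (by positivity) (by positivity)]
  rw [one_div (2*Real.pi)]

lemma sliceMp_le_hardyNorm (f : ℍ[ℝ] → ℍ[ℝ]) {p : ℝ≥0∞} (hptop : p ≠ ⊤) {I : ℍ[ℝ]}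
    (hI : I ∈ QSphere) {r : ℝ} (hr : r ∈ Set.Ico (0:ℝ) 1) :
    sliceMp f I p.toReal r ≤ hardyNorm f p := by
  have h1 : sliceMp f I p.toReal r ≤ sliceNorm f I p.toReal :=
    le_iSup₂ (f := fun r _ => sliceMp f I p.toReal r) r hr
  have h2 : sliceNormE f I p = sliceNorm f I p.toReal := by rw [sliceNormE, if_neg hptop]
  calc sliceMp f I p.toReal r ≤ sliceNormE f I p := by rw [h2]; exact h1
  _ ≤ hardyNorm f p := le_iSup₂ (f := fun I _ => sliceNormE f I p) I hI

lemma sliceNormE_le_hardyNorm (f : ℍ[ℝ] → ℍ[ℝ]) (p : ℝ≥0∞) {I : ℍ[ℝ]} (hI : I ∈ QSphere) :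
    sliceNormE f I p ≤ hardyNorm f p :=
  le_iSup₂ (f := fun I _ => sliceNormE f I p) I hI

lemma ofReal_le_sliceNormE_top (f : ℍ[ℝ] → ℍ[ℝ]) {I : ℍ[ℝ]}
    {r : ℝ} (hr : r ∈ Set.Ico (0:ℝ) 1) (θ : ℝ) :
    ENNReal.ofReal ‖f (circlePt I r θ)‖ ≤ sliceNormE f I ⊤ := by
  rw [sliceNormE, if_pos rfl]
  exact le_iSup₂ (f := fun (w : ℝ×ℝ) (_ : w.1^2 + w.2^2 < 1) =>
    ENNReal.ofReal ‖f (slicePt I w.1 w.2)‖) (r*Real.cos θ, r*Real.sin θ) (circle_disc hr θ)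

lemma lint_refl {w : ℝ → ℝ} (hw : Continuous w) (hnn : ∀ θ, 0 ≤ w θ)
    (hper : Function.Periodic w (2*Real.pi)) :
    ∫⁻ θ, ENNReal.ofReal (w (-θ)) ∂circM = ∫⁻ θ, ENNReal.ofReal (w θ) ∂circM := by
  have h2pi : (0:ℝ) < 2*Real.pi := by positivity
  have h1 : ∫ θ in Set.Ioc (0:ℝ) (2*Real.pi), w (-θ)
      = ∫ θ in Set.Ioc (0:ℝ) (2*Real.pi), w θ := by
    rw [← intervalIntegral.integral_of_le h2pi.le, ← intervalIntegral.integral_of_le h2pi.le]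
    rw [intervalIntegral.integral_comp_neg w]
    have hp := hper.intervalIntegral_add_eq (-(2*Real.pi)) 0
    simpa using hp
  rw [circM, lintegral_smul_measure, lintegral_smul_measure]
  congr 1
  rw [← MeasureTheory.ofReal_integral_eq_lintegral_ofReal
        (show IntegrableOn (fun θ : ℝ => w (-θ)) (Set.Ioc 0 (2*Real.pi)) volume from
          (hw.comp continuous_neg).integrableOn_Ioc)
        (Filter.Eventually.of_forall (fun θ => hnn (-θ))),
      ← MeasureTheory.ofReal_integral_eq_lintegral_ofReal (hw.integrableOn_Ioc)
        (Filter.Eventually.of_forall (fun θ => hnn θ))]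
  exact congrArg _ h1

end AuxHardy3

section AuxHardy2
open Quaternion

lemma re_mul_comm (u v : ℍ[ℝ]) : (u*v).re = (v*u).re := by
  simp only [Quaternion.re_mul]; ring

lemma slicePt_re {K : ℍ[ℝ]} (hK : K.re = 0) (x y : ℝ) : (slicePt K x y).re = x := by
  simp [slicePt, hK]

lemma starProd_pointwise {f g : ℍ[ℝ] → ℍ[ℝ]} (hgr : SliceRegular g) {J : ℍ[ℝ]} (hI : J ∈ QSphere)
    {x y : ℝ} (hxy : x^2 + y^2 < 1) :
    ‖starProd f g (slicePt J x y)‖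
      ≤ ‖f (slicePt J x y)‖ * (‖g (slicePt J x y)‖ + ‖g (slicePt J x (-y))‖) := by
  classical
  set q := slicePt J x y with hq
  by_cases hf0 : f q = 0
  · simp only [starProd]
    rw [if_pos hf0, norm_zero]
    positivity
  · have hsp : starProd f g q = f q * g ((f q)⁻¹ * q * f q) := by
      simp only [starProd, if_neg hf0]
    set q' := (f q)⁻¹ * q * f q with hq'
    have hnormq' : ‖q'‖ = ‖q‖ := by
      have hfn : ‖f q‖ ≠ 0 := norm_ne_zero_iff.2 hf0
      have hcan : (‖f q‖⁻¹ * ‖q‖) * ‖f q‖ = ‖q‖ := by field_simp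
      rw [hq', norm_mul, norm_mul, norm_inv]
      exact hcan
    have hreq' : q'.re = x := by
      rw [hq']
      have h1 : ((f q)⁻¹ * q * f q).re = (f q * ((f q)⁻¹ * q)).re := re_mul_comm _ _
      rw [h1, mul_inv_cancel_left₀ hf0]
      exact slicePt_re (unit_re hI) x y
    have hnq2 : ‖q'‖^2 = x^2 + y^2 := by rw [hnormq', hq]; exact norm_slicePt hI x y
    have hkey : ‖g q'‖ ≤ ‖g (slicePt J x y)‖ + ‖g (slicePt J x (-y))‖ := by
      set v : ℍ[ℝ] := q' - ((q'.re : ℝ) : ℍ[ℝ]) with hv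
      have hvre : v.re = 0 := by simp [hv]
      have hnormSqq' : normSq q' = q'.re^2 + normSq v := by
        rw [normSq_def', normSq_def']
        have e1 : v.imI = q'.imI := by simp [hv]
        have e2 : v.imJ = q'.imJ := by simp [hv]
        have e3 : v.imK = q'.imK := by simp [hv]
        rw [e1, e2, e3, hvre]
        ring
      have hnv2 : ‖v‖^2 = y^2 := by
        have h1 := Quaternion.normSq_eq_norm_mul_self q'
        have h2 := Quaternion.normSq_eq_norm_mul_self v
        have p1 : ‖q'‖^2 = ‖q'‖*‖q'‖ := by ring
        have p2 : ‖v‖^2 = ‖v‖*‖v‖ := by ring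
        have p3 : q'.re^2 = x^2 := by rw [hreq']
        linarith
      by_cases hv0 : v = 0
      · have hy0 : y = 0 := by
          rw [hv0] at hnv2
          simp at hnv2
          nlinarith [hnv2]
        have hq'x : q' = ((x:ℝ) : ℍ[ℝ]) := by
          have : q' = ((q'.re : ℝ) : ℍ[ℝ]) := by
            have := sub_eq_zero.mp hv0
            exact this
          rw [this, hreq']
        have hqx : slicePt J x y = ((x:ℝ) : ℍ[ℝ]) := by
          rw [hy0, slicePt, zero_smul, add_zero]
        rw [hq'x, ← hqx]
        have : (0:ℝ) ≤ ‖g (slicePt J x (-y))‖ := norm_nonneg _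
        linarith
      · set n : ℝ := ‖v‖ with hn
        have hnpos : 0 < n := norm_pos_iff.2 hv0
        set K : ℍ[ℝ] := n⁻¹ • v with hK
        have hKre : K.re = 0 := by simp [hK, hvre]
        have hKsq : K^2 = -1 := by
          apply pure_sq hKre
          have h2 := Quaternion.normSq_eq_norm_mul_self v
          rw [normSq_def', hvre] at h2
          have e1 : K.imI = n⁻¹ * v.imI := by simp [hK]
          have e2 : K.imJ = n⁻¹ * v.imJ := by simp [hK]
          have e3 : K.imK = n⁻¹ * v.imK := by simp [hK]
          rw [e1, e2, e3]
          have hne : n ≠ 0 := ne_of_gt hnpos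
          have hexp : (n⁻¹*v.imI)^2 + (n⁻¹*v.imJ)^2 + (n⁻¹*v.imK)^2
              = (v.imI^2 + v.imJ^2 + v.imK^2) / n^2 := by
            field_simp
          rw [hexp]
          rw [div_eq_one_iff_eq (by positivity)]
          have p2 : ‖v‖^2 = ‖v‖*‖v‖ := by ring
          nlinarith [h2, p2]
        have hq'slice : q' = slicePt K x n := by
          rw [slicePt, hK, smul_smul, mul_inv_cancel₀ (ne_of_gt hnpos), one_smul, hv, hreq']
          abel
        have hdisc : x^2 + n^2 < 1 := by rw [hnv2]; exact hxy
        have hrb := repBound hgr hI hKsq hdisc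
        rw [← hq'slice] at hrb
        have hny : n = |y| := by
          rw [← Real.sqrt_sq hnpos.le, hnv2, Real.sqrt_sq_eq_abs]
        rcases abs_cases y with ⟨hy, _⟩ | ⟨hy, _⟩
        · rw [hny, hy] at hrb
          exact hrb
        · rw [hny, hy] at hrb
          rw [neg_neg] at hrb
          linarith [hrb]
    rw [hsp, norm_mul]
    exact mul_le_mul_of_nonneg_left hkey (norm_nonneg _)

end AuxHardy2


section AuxHardy4
open Quaternion MeasureTheory

lemma circle_mem_ball {I : ℍ[ℝ]} (hI : I ∈ QSphere) {r : ℝ} (hr : r ∈ Set.Ico (0:ℝ) 1) (θ : ℝ) :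
    circlePt I r θ ∈ QBall := by
  rw [QBall, mem_ball_zero_iff]
  have h2 := norm_slicePt hI (r*Real.cos θ) (r*Real.sin θ)
  have h3 := circle_disc hr θ
  have h4 : ‖circlePt I r θ‖^2 < 1 := by rw [circlePt, h2]; exact h3
  nlinarith [norm_nonneg (circlePt I r θ)]

lemma circlePt_neg (I : ℍ[ℝ]) (r θ : ℝ) :
    slicePt I (r*Real.cos θ) (-(r*Real.sin θ)) = circlePt I r (-θ) := by
  rw [circlePt, Real.cos_neg, Real.sin_neg, mul_neg]

lemma periodic_circle (h : ℍ[ℝ] → ℍ[ℝ]) (I : ℍ[ℝ]) (r : ℝ) :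
    Function.Periodic (fun θ => ‖h (circlePt I r θ)‖) (2*Real.pi) := by
  intro θ
  simp only [circlePt, Real.cos_add_two_pi, Real.sin_add_two_pi]

lemma mainBound (f g fg : ℍ[ℝ] → ℍ[ℝ]) (p q : ℝ≥0∞) (hp : 1 ≤ p) (hq : 1 ≤ q)
    (hpq : 1/p + 1/q = 1) (hf : MemHp f p) (hg : MemHp g q) (hfg : SliceRegular fg)
    (hdef : ∀ w ∈ QBall, fg w = starProd f g w) {I : ℍ[ℝ]} (hI : I ∈ QSphere)
    {r : ℝ} (hr : r ∈ Set.Ico (0:ℝ) 1) :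
    sliceMp fg I 1 r ≤ 2 * (hardyNorm f p * hardyNorm g q) := by
  classical
  set F : ℝ → ℝ≥0∞ := fun θ => ENNReal.ofReal ‖f (circlePt I r θ)‖ with hF
  set G : ℝ → ℝ≥0∞ := fun θ => ENNReal.ofReal ‖g (circlePt I r θ)‖ with hG
  set G' : ℝ → ℝ≥0∞ := fun θ => ENNReal.ofReal ‖g (circlePt I r (-θ))‖ with hG'
  have hcf : Continuous (fun θ : ℝ => ‖f (circlePt I r θ)‖) := (contCircle hf.1 hI hr).norm
  have hcg : Continuous (fun θ : ℝ => ‖g (circlePt I r θ)‖) := (contCircle hg.1 hI hr).norm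
  have hcfg : Continuous (fun θ : ℝ => ‖fg (circlePt I r θ)‖) := (contCircle hfg hI hr).norm
  have hmF : Measurable F := (ENNReal.continuous_ofReal.comp hcf).measurable
  have hmG : Measurable G := (ENNReal.continuous_ofReal.comp hcg).measurable
  have hmG' : Measurable G' :=
    (ENNReal.continuous_ofReal.comp (hcg.comp continuous_neg)).measurable
  have hq0 : q ≠ 0 := fun h => by rw [h] at hq; exact (not_le.mpr zero_lt_one) hq
  have hp0 : p ≠ 0 := fun h => by rw [h] at hp; exact (not_le.mpr zero_lt_one) hp
  -- step 1
  have hH : sliceMp fg I 1 r = ∫⁻ θ, ENNReal.ofReal ‖fg (circlePt I r θ)‖ ∂circM := by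
    have h := sliceMp_eq_lintegral fg I one_pos hcfg
    simpa [ENNReal.rpow_one] using h
  -- step 2 : pointwise bound
  have hpt : ∀ θ : ℝ, ENNReal.ofReal ‖fg (circlePt I r θ)‖ ≤ F θ * (G θ + G' θ) := by
    intro θ
    have hreal : ‖fg (circlePt I r θ)‖
        ≤ ‖f (circlePt I r θ)‖ * (‖g (circlePt I r θ)‖ + ‖g (circlePt I r (-θ))‖) := by
      rw [hdef _ (circle_mem_ball hI hr θ)]
      have h := starProd_pointwise (f := f) hg.1 hI (circle_disc hr θ)
      rw [circlePt_neg] at h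
      exact h
    calc ENNReal.ofReal ‖fg (circlePt I r θ)‖
        ≤ ENNReal.ofReal (‖f (circlePt I r θ)‖
            * (‖g (circlePt I r θ)‖ + ‖g (circlePt I r (-θ))‖)) := ENNReal.ofReal_le_ofReal hreal
    _ = F θ * (G θ + G' θ) := by
        rw [ENNReal.ofReal_mul (norm_nonneg _), ENNReal.ofReal_add (norm_nonneg _) (norm_nonneg _)]
  -- step 3 : split integral
  have hsplit : ∫⁻ θ, ENNReal.ofReal ‖fg (circlePt I r θ)‖ ∂circM
      ≤ (∫⁻ θ, F θ * G θ ∂circM) + ∫⁻ θ, F θ * G' θ ∂circM := by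
    calc ∫⁻ θ, ENNReal.ofReal ‖fg (circlePt I r θ)‖ ∂circM
        ≤ ∫⁻ θ, F θ * (G θ + G' θ) ∂circM := lintegral_mono hpt
    _ = ∫⁻ θ, (F θ * G θ + F θ * G' θ) ∂circM := by
        congr 1; funext θ; ring
    _ = (∫⁻ θ, F θ * G θ ∂circM) + ∫⁻ θ, F θ * G' θ ∂circM :=
        lintegral_add_left (hmF.mul hmG) _
  -- step 4 : the two term bounds
  have hterm1 : ∫⁻ θ, F θ * G θ ∂circM ≤ hardyNorm f p * hardyNorm g q := by
    by_cases hptop : p = ⊤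
    · have hq1 : q = 1 := by
        rw [hptop] at hpq
        simp only [one_div, ENNReal.inv_top, zero_add] at hpq
        rw [ENNReal.inv_eq_one] at hpq
        exact hpq
      have hC : sliceNormE f I ⊤ ≤ hardyNorm f p := by
        rw [hptop]; exact sliceNormE_le_hardyNorm f ⊤ hI
      have hCne : sliceNormE f I ⊤ ≠ ⊤ := (lt_of_le_of_lt hC hf.2).ne
      have hGint : ∫⁻ θ, G θ ∂circM = sliceMp g I 1 r := by
        have h := sliceMp_eq_lintegral g I one_pos hcg
        simpa [ENNReal.rpow_one, hG] using h.symm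
      calc ∫⁻ θ, F θ * G θ ∂circM ≤ ∫⁻ θ, sliceNormE f I ⊤ * G θ ∂circM :=
            lintegral_mono (fun θ => mul_le_mul_left (ofReal_le_sliceNormE_top f hr θ) _)
      _ = sliceNormE f I ⊤ * ∫⁻ θ, G θ ∂circM := lintegral_const_mul' _ _ hCne
      _ ≤ hardyNorm f p * hardyNorm g q := by
          apply mul_le_mul' hC
          rw [hGint]
          have h := sliceMp_le_hardyNorm g (p := q) (by rw [hq1]; exact ENNReal.one_ne_top) hI hr
          rw [hq1] at h ⊢
          simpa using h
    · by_cases hqtop : q = ⊤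
      · have hp1 : p = 1 := by
          rw [hqtop] at hpq
          simp only [one_div, ENNReal.inv_top, add_zero] at hpq
          rw [ENNReal.inv_eq_one] at hpq
          exact hpq
        have hC : sliceNormE g I ⊤ ≤ hardyNorm g q := by
          rw [hqtop]; exact sliceNormE_le_hardyNorm g ⊤ hI
        have hCne : sliceNormE g I ⊤ ≠ ⊤ := (lt_of_le_of_lt hC hg.2).ne
        have hFint : ∫⁻ θ, F θ ∂circM = sliceMp f I 1 r := by
          have h := sliceMp_eq_lintegral f I one_pos hcf
          simpa [ENNReal.rpow_one, hF] using h.symm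
        calc ∫⁻ θ, F θ * G θ ∂circM ≤ ∫⁻ θ, F θ * sliceNormE g I ⊤ ∂circM :=
              lintegral_mono (fun θ => mul_le_mul_right (ofReal_le_sliceNormE_top g hr θ) _)
        _ = (∫⁻ θ, F θ ∂circM) * sliceNormE g I ⊤ := lintegral_mul_const' _ _ hCne
        _ ≤ hardyNorm f p * hardyNorm g q := by
            apply mul_le_mul' _ hC
            rw [hFint]
            have h := sliceMp_le_hardyNorm f (p := p) (by rw [hp1]; exact ENNReal.one_ne_top) hI hr
            rw [hp1] at h ⊢
            simpa using h
      · have hlt : 1 < p := by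
          rcases lt_or_eq_of_le hp with h | h
          · exact h
          · exfalso
            rw [← h] at hpq
            simp only [one_div, inv_one] at hpq
            have h0 : (1:ℝ≥0∞) + q⁻¹ = 1 + 0 := by rw [add_zero]; exact hpq
            have hq' := (ENNReal.add_right_inj (by norm_num : (1:ℝ≥0∞) ≠ ⊤)).mp h0
            rw [ENNReal.inv_eq_zero] at hq'
            exact hqtop hq'
        have hapos : 0 < p.toReal := ENNReal.toReal_pos hp0 hptop
        have hbpos : 0 < q.toReal := ENNReal.toReal_pos hq0 hqtop
        have hconj : Real.HolderConjugate p.toReal q.toReal := by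
          rw [Real.holderConjugate_iff]
          constructor
          · rw [← ENNReal.toReal_one]
            exact (ENNReal.toReal_lt_toReal ENNReal.one_ne_top hptop).mpr hlt
          · have htr := congrArg ENNReal.toReal hpq
            rw [one_div, one_div] at htr
            rw [ENNReal.toReal_add (ENNReal.inv_ne_top.2 hp0) (ENNReal.inv_ne_top.2 hq0)] at htr
            rw [ENNReal.toReal_inv, ENNReal.toReal_inv, ENNReal.toReal_one] at htr
            exact htr
        have hHold := ENNReal.lintegral_mul_le_Lp_mul_Lq circM hconj
          hmF.aemeasurable hmG.aemeasurable
        simp only [Pi.mul_apply] at hHold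
        have e1 : (∫⁻ θ, F θ ^ p.toReal ∂circM) ^ (1/p.toReal) = sliceMp f I p.toReal r :=
          (sliceMp_eq_lintegral f I hapos hcf).symm
        have e2 : (∫⁻ θ, G θ ^ q.toReal ∂circM) ^ (1/q.toReal) = sliceMp g I q.toReal r :=
          (sliceMp_eq_lintegral g I hbpos hcg).symm
        calc ∫⁻ θ, F θ * G θ ∂circM
            ≤ (∫⁻ θ, F θ ^ p.toReal ∂circM) ^ (1/p.toReal)
              * (∫⁻ θ, G θ ^ q.toReal ∂circM) ^ (1/q.toReal) := hHold
        _ = sliceMp f I p.toReal r * sliceMp g I q.toReal r := by rw [e1, e2]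
        _ ≤ hardyNorm f p * hardyNorm g q :=
            mul_le_mul' (sliceMp_le_hardyNorm f hptop hI hr) (sliceMp_le_hardyNorm g hqtop hI hr)
  have hterm2 : ∫⁻ θ, F θ * G' θ ∂circM ≤ hardyNorm f p * hardyNorm g q := by
    have hrefl1 : ∫⁻ θ, G' θ ∂circM = ∫⁻ θ, G θ ∂circM := by
      rw [hG', hG]
      exact lint_refl hcg (fun θ => norm_nonneg _) (periodic_circle g I r)
    by_cases hptop : p = ⊤
    · have hq1 : q = 1 := by
        rw [hptop] at hpq
        simp only [one_div, ENNReal.inv_top, zero_add] at hpq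
        rw [ENNReal.inv_eq_one] at hpq
        exact hpq
      have hC : sliceNormE f I ⊤ ≤ hardyNorm f p := by
        rw [hptop]; exact sliceNormE_le_hardyNorm f ⊤ hI
      have hCne : sliceNormE f I ⊤ ≠ ⊤ := (lt_of_le_of_lt hC hf.2).ne
      have hGint : ∫⁻ θ, G θ ∂circM = sliceMp g I 1 r := by
        have h := sliceMp_eq_lintegral g I one_pos hcg
        simpa [ENNReal.rpow_one, hG] using h.symm
      calc ∫⁻ θ, F θ * G' θ ∂circM ≤ ∫⁻ θ, sliceNormE f I ⊤ * G' θ ∂circM :=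
            lintegral_mono (fun θ => mul_le_mul_left (ofReal_le_sliceNormE_top f hr θ) _)
      _ = sliceNormE f I ⊤ * ∫⁻ θ, G' θ ∂circM := lintegral_const_mul' _ _ hCne
      _ ≤ hardyNorm f p * hardyNorm g q := by
          apply mul_le_mul' hC
          rw [hrefl1, hGint]
          have h := sliceMp_le_hardyNorm g (p := q) (by rw [hq1]; exact ENNReal.one_ne_top) hI hr
          rw [hq1] at h ⊢
          simpa using h
    · by_cases hqtop : q = ⊤
      · have hp1 : p = 1 := by
          rw [hqtop] at hpq
          simp only [one_div, ENNReal.inv_top, add_zero] at hpq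
          rw [ENNReal.inv_eq_one] at hpq
          exact hpq
        have hC : sliceNormE g I ⊤ ≤ hardyNorm g q := by
          rw [hqtop]; exact sliceNormE_le_hardyNorm g ⊤ hI
        have hCne : sliceNormE g I ⊤ ≠ ⊤ := (lt_of_le_of_lt hC hg.2).ne
        have hFint : ∫⁻ θ, F θ ∂circM = sliceMp f I 1 r := by
          have h := sliceMp_eq_lintegral f I one_pos hcf
          simpa [ENNReal.rpow_one, hF] using h.symm
        calc ∫⁻ θ, F θ * G' θ ∂circM ≤ ∫⁻ θ, F θ * sliceNormE g I ⊤ ∂circM :=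
              lintegral_mono (fun θ => mul_le_mul_right (ofReal_le_sliceNormE_top g hr (-θ)) _)
        _ = (∫⁻ θ, F θ ∂circM) * sliceNormE g I ⊤ := lintegral_mul_const' _ _ hCne
        _ ≤ hardyNorm f p * hardyNorm g q := by
            apply mul_le_mul' _ hC
            rw [hFint]
            have h := sliceMp_le_hardyNorm f (p := p) (by rw [hp1]; exact ENNReal.one_ne_top) hI hr
            rw [hp1] at h ⊢
            simpa using h
      · have hlt : 1 < p := by
          rcases lt_or_eq_of_le hp with h | h
          · exact h
          · exfalso
            rw [← h] at hpq
            simp only [one_div, inv_one] at hpq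
            have h0 : (1:ℝ≥0∞) + q⁻¹ = 1 + 0 := by rw [add_zero]; exact hpq
            have hq' := (ENNReal.add_right_inj (by norm_num : (1:ℝ≥0∞) ≠ ⊤)).mp h0
            rw [ENNReal.inv_eq_zero] at hq'
            exact hqtop hq'
        have hapos : 0 < p.toReal := ENNReal.toReal_pos hp0 hptop
        have hbpos : 0 < q.toReal := ENNReal.toReal_pos hq0 hqtop
        have hconj : Real.HolderConjugate p.toReal q.toReal := by
          rw [Real.holderConjugate_iff]
          constructor
          · rw [← ENNReal.toReal_one]
            exact (ENNReal.toReal_lt_toReal ENNReal.one_ne_top hptop).mpr hlt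
          · have htr := congrArg ENNReal.toReal hpq
            rw [one_div, one_div] at htr
            rw [ENNReal.toReal_add (ENNReal.inv_ne_top.2 hp0) (ENNReal.inv_ne_top.2 hq0)] at htr
            rw [ENNReal.toReal_inv, ENNReal.toReal_inv, ENNReal.toReal_one] at htr
            exact htr
        have hHold := ENNReal.lintegral_mul_le_Lp_mul_Lq circM hconj
          hmF.aemeasurable hmG'.aemeasurable
        simp only [Pi.mul_apply] at hHold
        have hpow : ∫⁻ θ, G' θ ^ q.toReal ∂circM = ∫⁻ θ, G θ ^ q.toReal ∂circM := by
          rw [hG', hG]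
          have hptw : ∀ t : ℝ, (ENNReal.ofReal ‖g (circlePt I r t)‖) ^ q.toReal
              = ENNReal.ofReal (‖g (circlePt I r t)‖ ^ q.toReal) :=
            fun t => ENNReal.ofReal_rpow_of_nonneg (norm_nonneg _) hbpos.le
          simp_rw [hptw]
          exact lint_refl (hcg.rpow_const (fun x => Or.inr hbpos.le))
            (fun t => Real.rpow_nonneg (norm_nonneg _) _)
            ((periodic_circle g I r).comp (fun x : ℝ => x ^ q.toReal))
        have e1 : (∫⁻ θ, F θ ^ p.toReal ∂circM) ^ (1/p.toReal) = sliceMp f I p.toReal r :=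
          (sliceMp_eq_lintegral f I hapos hcf).symm
        have e2 : (∫⁻ θ, G θ ^ q.toReal ∂circM) ^ (1/q.toReal) = sliceMp g I q.toReal r :=
          (sliceMp_eq_lintegral g I hbpos hcg).symm
        calc ∫⁻ θ, F θ * G' θ ∂circM
            ≤ (∫⁻ θ, F θ ^ p.toReal ∂circM) ^ (1/p.toReal)
              * (∫⁻ θ, G' θ ^ q.toReal ∂circM) ^ (1/q.toReal) := hHold
        _ = sliceMp f I p.toReal r * sliceMp g I q.toReal r := by rw [hpow, e1, e2]
        _ ≤ hardyNorm f p * hardyNorm g q :=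
            mul_le_mul' (sliceMp_le_hardyNorm f hptop hI hr) (sliceMp_le_hardyNorm g hqtop hI hr)
  calc sliceMp fg I 1 r ≤ (∫⁻ θ, F θ * G θ ∂circM) + ∫⁻ θ, F θ * G' θ ∂circM := by
        rw [hH]; exact hsplit
  _ ≤ hardyNorm f p * hardyNorm g q + hardyNorm f p * hardyNorm g q := add_le_add hterm1 hterm2
  _ = 2 * (hardyNorm f p * hardyNorm g q) := (two_mul _).symm

end AuxHardy4

/-- Hölder-type inequality: if `1/p + 1/q = 1`, `f ∈ H^p(𝔹)` and `g ∈ H^q(𝔹)`, then the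
regular product `f * g` is in `H^1(𝔹)` with `‖f*g‖₁ ≤ 2‖f‖_p‖g‖_q`. -/
theorem starProd_memH1 (f g fg : ℍ[ℝ] → ℍ[ℝ]) (p q : ℝ≥0∞)
    (hp : 1 ≤ p) (hq : 1 ≤ q) (hpq : 1 / p + 1 / q = 1)
    (hf : MemHp f p) (hg : MemHp g q)
    (hfg : SliceRegular fg) (hdef : ∀ w ∈ QBall, fg w = starProd f g w) :
    hardyNorm fg 1 < ⊤ ∧ hardyNorm fg 1 ≤ 2 * hardyNorm f p * hardyNorm g q := by
  have hmain : hardyNorm fg 1 ≤ 2 * hardyNorm f p * hardyNorm g q := by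
    rw [hardyNorm]
    apply iSup₂_le
    intro I hI
    have h1 : sliceNormE fg I 1 = sliceNorm fg I (1:ℝ≥0∞).toReal := by
      rw [sliceNormE, if_neg (by simp)]
    rw [h1, ENNReal.toReal_one, sliceNorm]
    apply iSup₂_le
    intro r hr
    have h := mainBound f g fg p q hp hq hpq hf hg hfg hdef hI hr
    rw [mul_assoc]
    exact h
  refine ⟨lt_of_le_of_lt hmain ?_, hmain⟩
  have h1 : hardyNorm f p ≠ ⊤ := hf.2.ne
  have h2 : hardyNorm g q ≠ ⊤ := hg.2.ne
  exact ENNReal.mul_lt_top (ENNReal.mul_lt_top (by norm_num) hf.2) hg.2
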